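/- For all nonnegative integers n, m, r and every real (or polynomial variable) y, C(m+r,m)·w̃_{n,m+r}(y) = y^r · ∑_{k=0}^{n} C(n,k)·{n−k brace r}·w̃_{k,m}(y). -/

import Mathlib

/-- Stirling numbers of the second kind. -/
def stirling2 : ℕ → ℕ → ℕ
  | 0, 0 => 1
  | 0, _ + 1 => 0
  | _ + 1, 0 => 0
  | n + 1, k + 1 => (k + 1) * stirling2 n (k + 1) + stirling2 n k

/-- Derangement numbers `d_n = n! ∑_{i=0}^n (-1)^i / i!`. -/
noncomputable def derang (n : ℕ) : ℝ :=
  (n.factorial : ℝ) * ∑ i ∈ Finset.range (n + 1), (-1 : ℝ) ^ i / (i.factorial : ℝ)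

/-- Partial derangement numbers `d_{n,r}`. -/
noncomputable def pderang (n r : ℕ) : ℝ :=
  if r ≤ n then (n.choose r : ℝ) * derang (n - r) else 0

/-- Partial deranged Bell polynomials `w̃_{n,r}(y)`. -/
noncomputable def pdbPoly (n r : ℕ) (y : ℝ) : ℝ :=
  ∑ k ∈ Finset.range (n + 1), (stirling2 n k : ℝ) * pderang k r * y ^ k

/-!
Partial derangements satisfy `C(m+r,m) d_{k,m+r} = C(k,r) d_{k-r,m}` (both count permutations
of a `k`-set with `m + r` fixed points, `r` of them marked), so the left side is
`∑_k {n brace k} C(k,r) d_{k-r,m} y^k`. Expanding `w̃_{k,m}` on the right and exchanging the sums,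
the coefficient of `d_{i,m} y^(i+r)` is `∑_j C(n,j) {j brace i} {n-j brace r}`, which counts
partitions of an `n`-set into `i + r` blocks of which `r` are marked, i.e. equals
`C(i+r,i) {n brace i+r}`; shifting `k = i + r` matches the two sides.
-/

theorem stirling2_eq_stirlingSecond : ∀ n k, stirling2 n k = Nat.stirlingSecond n k
  | 0, 0 | 0, _ + 1 | _ + 1, 0 => rfl
  | n + 1, k + 1 => by
    rw [stirling2, Nat.stirlingSecond_succ_succ, stirling2_eq_stirlingSecond n (k + 1),
      stirling2_eq_stirlingSecond n k]

namespace Nat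

theorem sum_choose_mul_stirlingSecond_zero_left (n b : ℕ) :
    ∑ i ∈ Finset.range (n + 1), n.choose i * stirlingSecond i 0 * stirlingSecond (n - i) b =
      stirlingSecond n b := by
  rw [Finset.sum_eq_single 0]
  · simp
  · intro i _ hi
    obtain ⟨j, rfl⟩ := exists_eq_succ_of_ne_zero hi
    simp
  · simp

theorem sum_choose_mul_stirlingSecond_zero_right (n a : ℕ) :
    ∑ i ∈ Finset.range (n + 1), n.choose i * stirlingSecond i a * stirlingSecond (n - i) 0 =
      stirlingSecond n a := by
  rw [Finset.sum_eq_single n]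
  · simp
  · intro i hi hin
    obtain ⟨j, hj⟩ : ∃ j, n - i = j + 1 :=
      ⟨n - i - 1, by have := Finset.mem_range.1 hi; omega⟩
    simp [hj]
  · simp

theorem choose_mul_stirlingSecond_add (n a b : ℕ) :
    (a + b).choose a * stirlingSecond n (a + b) =
      ∑ i ∈ Finset.range (n + 1), n.choose i * stirlingSecond i a * stirlingSecond (n - i) b := by
  induction n generalizing a b with
  | zero => rcases a with _ | a <;> rcases b with _ | b <;> simp [← add_assoc]
  | succ n ih =>
    rcases a with _ | a
    · simp [sum_choose_mul_stirlingSecond_zero_left]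
    rcases b with _ | b
    · simp [sum_choose_mul_stirlingSecond_zero_right]
    set T : ℕ → ℕ → ℕ := fun a b =>
      ∑ i ∈ Finset.range (n + 1), n.choose i * stirlingSecond i a * stirlingSecond (n - i) b
    have hsplit : ∑ i ∈ Finset.range (n + 1 + 1),
        (n + 1).choose i * stirlingSecond i (a + 1) * stirlingSecond (n + 1 - i) (b + 1) =
          (a + 1 + (b + 1)) * T (a + 1) (b + 1) + T (a + 1) b + T a (b + 1) := by
      have := Finset.sum_choose_succ_mul
        (fun i j => stirlingSecond i (a + 1) * stirlingSecond j (b + 1)) n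
      simp only [Nat.cast_id, ← mul_assoc] at this
      rw [this, ← Finset.sum_add_distrib]
      simp only [T, Finset.mul_sum, ← Finset.sum_add_distrib]
      refine Finset.sum_congr rfl fun i hi => ?_
      rw [show n + 1 - i = n - i + 1 by have := Finset.mem_range.1 hi; omega,
        stirlingSecond_succ_succ, stirlingSecond_succ_succ]
      ring
    rw [hsplit]
    simp only [T, ← ih]
    rw [show a + 1 + (b + 1) = a + b + 1 + 1 by omega,
      show a + 1 + b = a + b + 1 by omega, show a + (b + 1) = a + b + 1 by omega,
      stirlingSecond_succ_succ, choose_succ_succ' (a + b + 1) a]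
    ring

variable {R : Type*} [CommSemiring R]

theorem sum_stirlingSecond_mul_choose_mul (n r : ℕ) (h : ℕ → R) :
    ∑ k ∈ Finset.range (n + 1), (stirlingSecond n k : R) * k.choose r * h k =
      ∑ i ∈ Finset.range (n + 1),
        (stirlingSecond n (i + r) : R) * (i + r).choose r * h (i + r) := by
  set g : ℕ → R := fun k => (stirlingSecond n k : R) * k.choose r * h k
  have hg_lt : ∀ k < r, g k = 0 := fun k hk => by simp [g, choose_eq_zero_of_lt hk]
  have hg_gt : ∀ k, n < k → g k = 0 := fun k hk => by simp [g, stirlingSecond_eq_zero_of_lt hk]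
  calc ∑ k ∈ Finset.range (n + 1), g k
      = ∑ k ∈ Finset.range (r + (n + 1)), g k := by
        refine Finset.sum_subset (Finset.range_subset_range.2 (by omega)) fun k _ hk => ?_
        exact hg_gt k (by simpa using hk)
    _ = ∑ i ∈ Finset.range (n + 1), g (i + r) := by
        rw [Finset.sum_range_add, Finset.sum_eq_zero fun k hk => hg_lt k (Finset.mem_range.1 hk),
          zero_add]
        simp only [add_comm r]

theorem sum_choose_mul_stirlingSecond_mul_sum (n r : ℕ) (g : ℕ → R) :
    ∑ j ∈ Finset.range (n + 1), (n.choose j : R) * stirlingSecond (n - j) r *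
        ∑ i ∈ Finset.range (j + 1), (stirlingSecond j i : R) * g i =
      ∑ i ∈ Finset.range (n + 1), ((i + r).choose i : R) * stirlingSecond n (i + r) * g i := by
  have hextend : ∀ j ∈ Finset.range (n + 1),
      ∑ i ∈ Finset.range (j + 1), (stirlingSecond j i : R) * g i =
        ∑ i ∈ Finset.range (n + 1), (stirlingSecond j i : R) * g i := fun j hj => by
    refine Finset.sum_subset (Finset.range_subset_range.2 (by simpa using hj)) fun i _ hi => ?_
    simp [stirlingSecond_eq_zero_of_lt (by simpa using hi : j < i)]
  rw [Finset.sum_congr rfl fun j hj => congrArg _ (hextend j hj)]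
  simp only [Finset.mul_sum]
  rw [Finset.sum_comm]
  refine Finset.sum_congr rfl fun i _ => ?_
  rw [← Nat.cast_mul, choose_mul_stirlingSecond_add, Nat.cast_sum, Finset.sum_mul]
  refine Finset.sum_congr rfl fun j _ => ?_
  push_cast
  ring

end Nat

theorem choose_mul_pderang_add (m r k : ℕ) :
    ((m + r).choose m : ℝ) * pderang k (m + r) = (k.choose r : ℝ) * pderang (k - r) m := by
  unfold pderang
  by_cases hk : m + r ≤ k
  · have hchoose : k.choose (m + r) * (m + r).choose m = k.choose r * (k - r).choose m := by
      rw [Nat.choose_symm_add, Nat.choose_mul (by omega), Nat.add_sub_cancel]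
    rw [if_pos hk, if_pos (by omega), show k - (m + r) = k - r - m by omega]
    have hchooseR := congrArg (Nat.cast : ℕ → ℝ) hchoose
    push_cast at hchooseR
    linear_combination derang (k - r - m) * hchooseR
  · rw [if_neg hk]
    rcases le_or_gt r k with hr | hr
    · rw [if_neg (by omega), mul_zero, mul_zero]
    · rw [Nat.choose_eq_zero_of_lt hr, Nat.cast_zero, mul_zero, zero_mul]

/-- `C(m+r,m) w̃_{n,m+r}(y) = y^r ∑_{k=0}^n C(n,k) {n-k brace r} w̃_{k,m}(y)`. -/
theorem choose_mul_pdbPoly_add (n m r : ℕ) (y : ℝ) :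
    ((m + r).choose m : ℝ) * pdbPoly n (m + r) y =
      y ^ r * ∑ k ∈ Finset.range (n + 1),
        (n.choose k : ℝ) * (stirling2 (n - k) r : ℝ) * pdbPoly k m y := by
  simp only [pdbPoly, stirling2_eq_stirlingSecond, mul_assoc]
  calc ((m + r).choose m : ℝ) * ∑ k ∈ Finset.range (n + 1),
        (Nat.stirlingSecond n k : ℝ) * (pderang k (m + r) * y ^ k)
      = ∑ k ∈ Finset.range (n + 1),
          (Nat.stirlingSecond n k : ℝ) * (k.choose r * (pderang (k - r) m * y ^ k)) := by
        rw [Finset.mul_sum]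
        refine Finset.sum_congr rfl fun k _ => ?_
        rw [← mul_assoc (k.choose r : ℝ), ← choose_mul_pderang_add]
        ring
    _ = ∑ i ∈ Finset.range (n + 1), (Nat.stirlingSecond n (i + r) : ℝ) *
          ((i + r).choose r * (pderang i m * y ^ (i + r))) := by
        simpa only [mul_assoc, Nat.add_sub_cancel] using
          Nat.sum_stirlingSecond_mul_choose_mul n r fun k => pderang (k - r) m * y ^ k
    _ = y ^ r * ∑ i ∈ Finset.range (n + 1), ((i + r).choose i : ℝ) *
          Nat.stirlingSecond n (i + r) * (pderang i m * y ^ i) := by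
        rw [Finset.mul_sum]
        refine Finset.sum_congr rfl fun i _ => ?_
        rw [Nat.choose_symm_add, pow_add]
        ring
    _ = _ := by
        rw [← Nat.sum_choose_mul_stirlingSecond_mul_sum n r fun i => pderang i m * y ^ i]
        simp only [mul_assoc]
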